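/- Soundness of constraint reduction C4: if Γ ∪ {M, N} ⊢ U is derivable in the Dolev-Yao sequent calculus under a ground substitution θ (i.e., (Γ∪{M,N})θ ⊢ Uθ is derivable), then (Γ ∪ {⟨M,N⟩})θ ⊢ Uθ is derivable. -/
import Mathlib


/-- Dolev-Yao messages with variables. -/
inductive MsgV : Type
  | name : ℕ → MsgV
  | var  : ℕ → MsgV
  | pair : MsgV → MsgV → MsgV
  | enc  : MsgV → MsgV → MsgV
  deriving DecidableEq

open MsgV

/-- Homomorphic extension of a substitution to messages. -/
def substT (θ : ℕ → MsgV) : MsgV → MsgV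
  | name a => name a
  | var x => θ x
  | pair m n => pair (substT θ m) (substT θ n)
  | enc m k => enc (substT θ m) (substT θ k)

/-- Variables occurring in a message. -/
def varsT : MsgV → Finset ℕ
  | name _ => ∅
  | var x => {x}
  | pair m n => varsT m ∪ varsT n
  | enc m k => varsT m ∪ varsT k

/-- Ground (variable-free) messages. -/
def groundT (m : MsgV) : Prop := varsT m = ∅

/-- Ground substitutions. -/
def groundSub (θ : ℕ → MsgV) : Prop := ∀ x, groundT (θ x)

/-- The Dolev-Yao sequent calculus. -/
inductive SC : Set MsgV → MsgV → Prop
  | id {Γ M} : M ∈ Γ → SC Γ M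
  | pR {Γ M N} : SC Γ M → SC Γ N → SC Γ (pair M N)
  | eR {Γ M K} : SC Γ M → SC Γ K → SC Γ (enc M K)
  | pL {Γ M N T} : pair M N ∈ Γ →
      SC (insert M (insert N Γ)) T → SC Γ T
  | eL {Γ M K T} : enc M K ∈ Γ → SC Γ K →
      SC (insert M (insert K Γ)) T → SC Γ T

/-- Right-deducibility: derivability using only id, p_R, e_R. -/
inductive SCR : Set MsgV → MsgV → Prop
  | id {Γ M} : M ∈ Γ → SCR Γ M
  | pR {Γ M N} : SCR Γ M → SCR Γ N → SCR Γ (pair M N)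
  | eR {Γ M K} : SCR Γ M → SCR Γ K → SCR Γ (enc M K)

theorem SC.weaken {Γ Δ : Set MsgV} {T : MsgV} (h : SC Γ T) (hs : Γ ⊆ Δ) :
    SC Δ T := by
  induction h generalizing Δ with
  | id hM => exact SC.id (hs hM)
  | pR _ _ ih1 ih2 => exact SC.pR (ih1 hs) (ih2 hs)
  | eR _ _ ih1 ih2 => exact SC.eR (ih1 hs) (ih2 hs)
  | pL hmem _ ih =>
      exact SC.pL (hs hmem) (ih (Set.insert_subset_insert (Set.insert_subset_insert hs)))
  | eL hmem _ _ ihK ih =>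
      exact SC.eL (hs hmem) (ihK hs) (ih (Set.insert_subset_insert (Set.insert_subset_insert hs)))

/-- Soundness of constraint reduction C4. -/
theorem c4_sound (Γ : Set MsgV) (M N U : MsgV) (θ : ℕ → MsgV)
    (hg : groundSub θ)
    (h : SC ((substT θ) '' (Γ ∪ {M, N})) (substT θ U)) :
    SC ((substT θ) '' (Γ ∪ {pair M N})) (substT θ U) := by
  have hmem : pair (substT θ M) (substT θ N) ∈ (substT θ) '' (Γ ∪ {pair M N}) :=
    ⟨pair M N, Or.inr rfl, rfl⟩
  refine SC.pL hmem (h.weaken ?_)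
  rintro _ ⟨x, hx, rfl⟩
  rcases hx with hx | hx | hx
  · exact Or.inr (Or.inr ⟨x, Or.inl hx, rfl⟩)
  · exact Or.inl (by rw [hx])
  · exact Or.inr (Or.inl (by rw [Set.mem_singleton_iff] at hx; rw [hx]))
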